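/- arXiv:1707.05058 — 3 statements merged into one kernel-verified Lean document; each statement's English description precedes it below -/
import Mathlib

section
/- For any undirected graph G(V,E) (not necessarily chordal), the cones S^n_+(E,?) and S^n_+(E,0) are dual to each other with respect to the trace inner product in the space S^n(E,0); that is, S^n_+(E,?) = {X ∈ S^n(E,0) : ⟨X,Z⟩ ≥ 0 for all Z ∈ S^n_+(E,0)} and S^n_+(E,0) = {Z ∈ S^n(E,0) : ⟨Z,X⟩ ≥ 0 for all X ∈ S^n_+(E,?)}. -/
open Matrix BigOperators

/-- The edge set augmented with all self-loops: `E* = E ∪ {(i,i) : i ∈ V}`. -/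
def EStar {n : ℕ} (E : Set (Fin n × Fin n)) : Set (Fin n × Fin n) :=
  E ∪ {q | q.1 = q.2}

/-- The edge set of an undirected graph is symmetric. -/
def SymmEdges {n : ℕ} (E : Set (Fin n × Fin n)) : Prop :=
  ∀ i j : Fin n, (i, j) ∈ E → (j, i) ∈ E

/-- `S^n(E,0)`: real symmetric `n × n` matrices vanishing outside `E*`. -/
def SparseSym {n : ℕ} (E : Set (Fin n × Fin n)) (X : Matrix (Fin n) (Fin n) ℝ) : Prop :=
  X.IsSymm ∧ ∀ i j : Fin n, (i, j) ∉ EStar E → X i j = 0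

/-- `S^n_+(E,?)`: matrices in `S^n(E,0)` admitting a positive semidefinite completion. -/
def PSDCompletable {n : ℕ} (E : Set (Fin n × Fin n)) (X : Matrix (Fin n) (Fin n) ℝ) : Prop :=
  SparseSym E X ∧ ∃ M : Matrix (Fin n) (Fin n) ℝ, M.PosSemidef ∧
    ∀ i j : Fin n, (i, j) ∈ EStar E → M i j = X i j

/-- `S^n_+(E,0)`: positive semidefinite matrices with sparsity pattern `E`. -/
def SparsePSD {n : ℕ} (E : Set (Fin n × Fin n)) (X : Matrix (Fin n) (Fin n) ℝ) : Prop :=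
  SparseSym E X ∧ X.PosSemidef

/-- The selector matrix `E_C ∈ R^{|C| × n}` of a subset `C ⊆ {1,…,n}`:
`(E_C)_{ij} = 1` if the `i`-th smallest element of `C` equals `j`, and `0` otherwise. -/
def selector {n : ℕ} (C : Finset (Fin n)) : Matrix (Fin C.card) (Fin n) ℝ :=
  Matrix.of fun i j => if (C.orderIsoOfFin rfl i).1 = j then 1 else 0

/-- A clique: a subset of vertices inducing a complete subgraph. -/
def IsClique {n : ℕ} (E : Set (Fin n × Fin n)) (C : Finset (Fin n)) : Prop :=
  ∀ i ∈ C, ∀ j ∈ C, i ≠ j → (i, j) ∈ E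

/-- A maximal clique: a clique not contained in any other clique. -/
def IsMaximalClique {n : ℕ} (E : Set (Fin n × Fin n)) (C : Finset (Fin n)) : Prop :=
  IsClique E C ∧ ∀ D : Finset (Fin n), IsClique E D → C ⊆ D → D = C

/-- A cycle of length `k+1`: pairwise distinct vertices consecutively adjacent (cyclically). -/
def IsCycle {n : ℕ} (E : Set (Fin n × Fin n)) {k : ℕ} (v : Fin (k + 1) → Fin n) : Prop :=
  Function.Injective v ∧ ∀ i : Fin (k + 1), (v i, v (i + 1)) ∈ E

/-- A chord: an edge joining two non-consecutive vertices of the cycle. -/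
def HasChord {n : ℕ} (E : Set (Fin n × Fin n)) {k : ℕ} (v : Fin (k + 1) → Fin n) : Prop :=
  ∃ i j : Fin (k + 1), i ≠ j ∧ j ≠ i + 1 ∧ i ≠ j + 1 ∧ (v i, v j) ∈ E

/-- A graph is chordal if every cycle of length at least four has a chord. -/
def IsChordal {n : ℕ} (E : Set (Fin n × Fin n)) : Prop :=
  ∀ k : ℕ, 4 ≤ k + 1 → ∀ v : Fin (k + 1) → Fin n, IsCycle E v → HasChord E v


/-!
`S^n_+(E,?)` is the image `K` of the PSD cone under the projection `P` that zeroes every entry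
outside `E*`, and `tr (Z * P M) = tr (Z * M)` whenever `Z` vanishes outside `E*`; with the
self-duality of the PSD cone this gives both easy inclusions, and also the converse of the second
duality (test `Z` against `P (v vᵀ)`). For the converse of the first duality, `K` is closed,
because `P` preserves the trace and PSD matrices of bounded trace form a compact set. So a sparse
`X ∉ K` is strictly separated from `K` by a linear functional, and the symmetrised matrix of that
functional, composed with `P`, is a sparse PSD matrix `Z` with `tr (X * Z) < 0`.
-/

namespace Matrix

instance locallyConvexSpace {𝕜 E m n : Type*} [Semiring 𝕜] [PartialOrder 𝕜] [AddCommMonoid E]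
    [TopologicalSpace E] [Module 𝕜 E] [LocallyConvexSpace 𝕜 E] :
    LocallyConvexSpace 𝕜 (Matrix m n E) :=
  inferInstanceAs (LocallyConvexSpace 𝕜 (m → n → E))

variable {ι : Type*} [Fintype ι]

lemma trace_mul_vecMulVec_self (A : Matrix ι ι ℝ) (v : ι → ℝ) :
    (A * vecMulVec v v).trace = v ⬝ᵥ A *ᵥ v := by
  rw [mul_vecMulVec, trace_vecMulVec, dotProduct_comm]

lemma PosSemidef.trace_mul_nonneg {A B : Matrix ι ι ℝ} (hA : A.PosSemidef) (hB : B.PosSemidef) :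
    0 ≤ (A * B).trace := by
  obtain ⟨m, v, rfl⟩ := posSemidef_iff_eq_sum_vecMulVec.mp hB
  simp only [star_trivial, Finset.mul_sum, trace_sum, trace_mul_vecMulVec_self]
  exact Finset.sum_nonneg fun i _ => by simpa using hA.dotProduct_mulVec_nonneg (v i)

lemma posSemidef_of_forall_trace_mul_nonneg {W : Matrix ι ι ℝ} (hW : W.IsSymm)
    (h : ∀ M : Matrix ι ι ℝ, M.PosSemidef → 0 ≤ (W * M).trace) : W.PosSemidef := by
  refine .of_dotProduct_mulVec_nonneg (isHermitian_iff_isSymm.mpr hW) fun v => ?_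
  simpa [trace_mul_vecMulVec_self] using h _ (posSemidef_vecMulVec_self_star v)

lemma isClosed_setOf_posSemidef : IsClosed {M : Matrix ι ι ℝ | M.PosSemidef} := by
  simp only [posSemidef_iff_dotProduct_mulVec, Set.ofPred_and, Set.ofPred_forall]
  refine .inter (isClosed_eq (by fun_prop) continuous_id) (isClosed_iInter fun v => ?_)
  exact isClosed_le continuous_const
    (continuous_const.dotProduct (continuous_id.matrix_mulVec continuous_const))

lemma PosSemidef.two_mul_abs_apply_le {M : Matrix ι ι ℝ} (hM : M.PosSemidef) (i j : ι) :
    2 * |M i j| ≤ M i i + M j j := by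
  classical
  have hsymm : M j i = M i j := by simpa using congrFun (congrFun hM.1 i) j
  have quad (c : ℝ) : 0 ≤ M i i + 2 * c * M i j + c ^ 2 * M j j := by
    have := hM.dotProduct_mulVec_nonneg (Pi.single i 1 + Pi.single j c)
    simp only [star_trivial, mulVec_add, mulVec_single, MulOpposite.op_one, one_smul,
      op_smul_eq_smul, dotProduct_add, add_dotProduct, single_dotProduct, col_apply, one_mul,
      hsymm, dotProduct_smul, smul_eq_mul] at this
    linarith
  have hplus := quad 1
  have hminus := quad (-1)
  norm_num at hplus hminus
  rcases abs_cases (M i j) with ⟨h, -⟩ | ⟨h, -⟩ <;> rw [h] <;> linarith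

lemma PosSemidef.abs_apply_le_trace {M : Matrix ι ι ℝ} (hM : M.PosSemidef) (i j : ι) :
    |M i j| ≤ M.trace := by
  have diag_le (k : ι) : M k k ≤ M.trace :=
    Finset.single_le_sum (f := fun k => M k k) (fun _ _ => hM.diag_nonneg) (Finset.mem_univ k)
  linarith [hM.two_mul_abs_apply_le i j, diag_le i, diag_le j]

lemma isCompact_setOf_posSemidef_trace_le (B : ℝ) :
    IsCompact {M : Matrix ι ι ℝ | M.PosSemidef ∧ M.trace ≤ B} := by
  have hbox : IsCompact (Set.univ.pi fun _ : ι => Set.univ.pi fun _ : ι => Set.Icc (-B) B) :=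
    isCompact_univ_pi fun _ => isCompact_univ_pi fun _ => isCompact_Icc
  refine hbox.of_isClosed_subset
    (isClosed_setOf_posSemidef.inter (isClosed_le continuous_id.matrix_trace continuous_const)) ?_
  rintro M ⟨hM, hB⟩ i - j -
  exact abs_le.mp ((hM.abs_apply_le_trace i j).trans hB)

variable [DecidableEq ι]

noncomputable def symmTraceDual (g : Matrix ι ι ℝ →ₗ[ℝ] ℝ) : Matrix ι ι ℝ :=
  of fun i j => (g (single i j 1) + g (single j i 1)) / 2

variable (g : Matrix ι ι ℝ →ₗ[ℝ] ℝ)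

omit [Fintype ι] in
lemma symmTraceDual_isSymm : (symmTraceDual g).IsSymm := by
  ext i j
  simp [symmTraceDual, add_comm]

lemma trace_mul_symmTraceDual {A : Matrix ι ι ℝ} (hA : A.IsSymm) :
    (A * symmTraceDual g).trace = g A := by
  have hA' (i j : ι) : A j i = A i j := by simpa using congrFun (congrFun hA i) j
  have expand : g A = ∑ i, ∑ j, A i j * g (single i j 1) := by
    conv_lhs => rw [matrix_eq_sum_single A]
    have hsingle (i j : ι) : single i j (A i j) = A i j • single i j 1 := by
      rw [smul_single, smul_eq_mul, mul_one]
    simp only [map_sum, hsingle, map_smul, smul_eq_mul]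
  have swap : ∑ i, ∑ j, A i j * g (single j i 1) = ∑ i, ∑ j, A i j * g (single i j 1) := by
    rw [Finset.sum_comm]
    simp only [hA']
  calc (A * symmTraceDual g).trace
      = (∑ i, ∑ j, A i j * g (single j i 1) + ∑ i, ∑ j, A i j * g (single i j 1)) / 2 := by
        simp only [trace, diag, mul_apply, symmTraceDual, of_apply, ← Finset.sum_add_distrib,
          Finset.sum_div, mul_add, add_div, mul_div_assoc]
    _ = g A := by rw [swap, expand]; ring

lemma symmTraceDual_posSemidef (hg : ∀ M : Matrix ι ι ℝ, M.PosSemidef → 0 ≤ g M) :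
    (symmTraceDual g).PosSemidef :=
  posSemidef_of_forall_trace_mul_nonneg (symmTraceDual_isSymm g) fun M hM => by
    rw [trace_mul_comm, trace_mul_symmTraceDual g (isHermitian_iff_isSymm.mp hM.1)]
    exact hg M hM

end Matrix

section SparseCones

open Matrix

variable {n : ℕ} {E : Set (Fin n × Fin n)}

lemma SymmEdges.mem_eStar_swap (hE : SymmEdges E) {i j : Fin n} (h : (i, j) ∈ EStar E) :
    (j, i) ∈ EStar E := by
  rcases h with h | h
  · exact Or.inl (hE i j h)
  · exact Or.inr h.symm

variable (E) in
open Classical in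
noncomputable def sparseProj : Matrix (Fin n) (Fin n) ℝ →ₗ[ℝ] Matrix (Fin n) (Fin n) ℝ where
  toFun M := of fun i j => if (i, j) ∈ EStar E then M i j else 0
  map_add' A B := by ext i j; simp only [of_apply, Matrix.add_apply]; split_ifs <;> simp
  map_smul' c A := by
    ext i j; simp only [of_apply, Matrix.smul_apply, RingHom.id_apply]; split_ifs <;> simp

open Classical in
lemma sparseProj_apply (M : Matrix (Fin n) (Fin n) ℝ) (i j : Fin n) :
    sparseProj E M i j = if (i, j) ∈ EStar E then M i j else 0 := rfl

lemma sparseProj_apply_of_mem (M : Matrix (Fin n) (Fin n) ℝ) {i j : Fin n}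
    (h : (i, j) ∈ EStar E) : sparseProj E M i j = M i j := by
  classical
  rw [sparseProj_apply, if_pos h]

lemma sparseProj_apply_of_notMem (M : Matrix (Fin n) (Fin n) ℝ) {i j : Fin n}
    (h : (i, j) ∉ EStar E) : sparseProj E M i j = 0 := by
  classical
  rw [sparseProj_apply, if_neg h]

lemma sparseProj_eq_self {X : Matrix (Fin n) (Fin n) ℝ}
    (hX : ∀ i j : Fin n, (i, j) ∉ EStar E → X i j = 0) : sparseProj E X = X := by
  ext i j
  by_cases h : (i, j) ∈ EStar E
  · exact sparseProj_apply_of_mem X h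
  · rw [sparseProj_apply_of_notMem X h, hX i j h]

lemma sparseProj_single_of_notMem {i j : Fin n} (h : (i, j) ∉ EStar E) (a : ℝ) :
    sparseProj E (single i j a) = 0 := by
  classical
  ext k l
  rw [sparseProj_apply, Matrix.zero_apply]
  split_ifs with hkl
  · rw [Matrix.single_apply, if_neg]
    rintro ⟨rfl, rfl⟩
    exact h hkl
  · rfl

lemma trace_sparseProj (M : Matrix (Fin n) (Fin n) ℝ) : (sparseProj E M).trace = M.trace :=
  Finset.sum_congr rfl fun _ _ => sparseProj_apply_of_mem M (Or.inr rfl)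

lemma trace_mul_sparseProj (hE : SymmEdges E) {Z : Matrix (Fin n) (Fin n) ℝ}
    (hZ : ∀ i j : Fin n, (i, j) ∉ EStar E → Z i j = 0) (A : Matrix (Fin n) (Fin n) ℝ) :
    (Z * sparseProj E A).trace = (Z * A).trace := by
  simp only [trace, diag, mul_apply]
  refine Finset.sum_congr rfl fun i _ => Finset.sum_congr rfl fun j _ => ?_
  by_cases h : (i, j) ∈ EStar E
  · rw [sparseProj_apply_of_mem A (hE.mem_eStar_swap h)]
  · rw [hZ i j h, zero_mul, zero_mul]

lemma psdCompletable_iff (hE : SymmEdges E) {X : Matrix (Fin n) (Fin n) ℝ} :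
    PSDCompletable E X ↔ X ∈ sparseProj E '' {M | M.PosSemidef} := by
  constructor
  · rintro ⟨⟨-, hX⟩, M, hM, hMX⟩
    refine ⟨M, hM, ?_⟩
    ext i j
    by_cases h : (i, j) ∈ EStar E
    · rw [sparseProj_apply_of_mem M h, hMX i j h]
    · rw [sparseProj_apply_of_notMem M h, hX i j h]
  · rintro ⟨M, hM, rfl⟩
    have hMsymm : M.IsSymm := isHermitian_iff_isSymm.mp hM.1
    refine ⟨⟨?_, fun _ _ => sparseProj_apply_of_notMem M⟩, M, hM,
      fun i j h => (sparseProj_apply_of_mem M h).symm⟩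
    ext i j
    by_cases h : (i, j) ∈ EStar E
    · rw [transpose_apply, sparseProj_apply_of_mem M h,
        sparseProj_apply_of_mem M (hE.mem_eStar_swap h), hMsymm.apply]
    · rw [transpose_apply, sparseProj_apply_of_notMem M h,
        sparseProj_apply_of_notMem M (fun h' => h (hE.mem_eStar_swap h'))]

lemma isClosed_image_sparseProj_posSemidef :
    IsClosed (sparseProj E '' {M : Matrix (Fin n) (Fin n) ℝ | M.PosSemidef}) := by
  refine closure_subset_iff_isClosed.mp fun Y hY => ?_
  -- Near `Y` the image is that of a compact set, since `sparseProj` preserves the trace.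
  set B := Y.trace + 1
  have hopen : IsOpen {X : Matrix (Fin n) (Fin n) ℝ | X.trace < B} :=
    isOpen_lt continuous_id.matrix_trace continuous_const
  have hbounded : {X | X.trace < B} ∩ sparseProj E '' {M | M.PosSemidef} ⊆
      sparseProj E '' {M | M.PosSemidef ∧ M.trace ≤ B} := by
    rintro _ ⟨hB, M, hM, rfl⟩
    rw [Set.mem_ofPred_eq, trace_sparseProj] at hB
    exact ⟨M, ⟨hM, hB.le⟩, rfl⟩
  have hcompact := (isCompact_setOf_posSemidef_trace_le B).image
    (LinearMap.continuous_of_finiteDimensional (sparseProj E))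
  obtain ⟨M, ⟨hM, -⟩, hMY⟩ := hcompact.isClosed.closure_subset
    (closure_mono hbounded (hopen.inter_closure ⟨show Y.trace < B from lt_add_one _, hY⟩))
  exact ⟨M, hM, hMY⟩

variable (E) in
noncomputable def sparseProjPSDCone : ProperCone ℝ (Matrix (Fin n) (Fin n) ℝ) where
  carrier := sparseProj E '' {M | M.PosSemidef}
  zero_mem' := ⟨0, .zero, map_zero _⟩
  add_mem' := by
    rintro _ _ ⟨A, hA, rfl⟩ ⟨B, hB, rfl⟩
    exact ⟨A + B, hA.add hB, map_add _ A B⟩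
  smul_mem' := by
    rintro c _ ⟨A, hA, rfl⟩
    exact ⟨(c : ℝ) • A, hA.smul c.2, map_smul _ (c : ℝ) A⟩
  isClosed' := isClosed_image_sparseProj_posSemidef

lemma SparsePSD.trace_mul_nonneg (hE : SymmEdges E) {Z X : Matrix (Fin n) (Fin n) ℝ}
    (hZ : SparsePSD E Z) (hX : PSDCompletable E X) : 0 ≤ (Z * X).trace := by
  obtain ⟨M, hM, rfl⟩ := (psdCompletable_iff hE).mp hX
  rw [trace_mul_sparseProj hE hZ.1.2]
  exact hZ.2.trace_mul_nonneg hM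

lemma SparseSym.psdCompletable_of_forall_trace_mul_nonneg {X : Matrix (Fin n) (Fin n) ℝ}
    (hX : SparseSym E X) (hE : SymmEdges E)
    (h : ∀ Z : Matrix (Fin n) (Fin n) ℝ, SparsePSD E Z → 0 ≤ (X * Z).trace) :
    PSDCompletable E X := by
  rw [psdCompletable_iff hE]
  by_contra hXK
  obtain ⟨f, hfK, hfX⟩ := (sparseProjPSDCone E).hyperplane_separation_point hXK
  set g := f.toLinearMap ∘ₗ sparseProj E
  have hg : ∀ M : Matrix (Fin n) (Fin n) ℝ, M.PosSemidef → 0 ≤ g M :=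
    fun M hM => hfK _ ⟨M, hM, rfl⟩
  have hsparse : ∀ i j : Fin n, (i, j) ∉ EStar E → symmTraceDual g i j = 0 := by
    intro i j h
    simp [symmTraceDual, g, sparseProj_single_of_notMem h,
      sparseProj_single_of_notMem fun h' => h (hE.mem_eStar_swap h')]
  have hZ : SparsePSD E (symmTraceDual g) :=
    ⟨⟨symmTraceDual_isSymm g, hsparse⟩, symmTraceDual_posSemidef g hg⟩
  have hgX : g X = f X := congrArg f (sparseProj_eq_self hX.2)
  linarith [h _ hZ, trace_mul_symmTraceDual g hX.1]

lemma SparseSym.posSemidef_of_forall_trace_mul_nonneg {Z : Matrix (Fin n) (Fin n) ℝ}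
    (hZ : SparseSym E Z) (hE : SymmEdges E)
    (h : ∀ X : Matrix (Fin n) (Fin n) ℝ, PSDCompletable E X → 0 ≤ (Z * X).trace) :
    Z.PosSemidef :=
  Matrix.posSemidef_of_forall_trace_mul_nonneg hZ.1 fun M hM => by
    rw [← trace_mul_sparseProj hE hZ.2]
    exact h _ ((psdCompletable_iff hE).mpr ⟨M, hM, rfl⟩)

end SparseCones

/-- For any undirected graph `G(V,E)`, the cones `S^n_+(E,?)` and `S^n_+(E,0)` are dual to
each other with respect to the trace inner product in the space `S^n(E,0)`. -/
theorem sparse_cones_dual {n : ℕ} (E : Set (Fin n × Fin n)) (hE : SymmEdges E) :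
    ({X : Matrix (Fin n) (Fin n) ℝ | PSDCompletable E X} =
      {X : Matrix (Fin n) (Fin n) ℝ |
        SparseSym E X ∧ ∀ Z : Matrix (Fin n) (Fin n) ℝ, SparsePSD E Z → 0 ≤ (X * Z).trace}) ∧
    ({Z : Matrix (Fin n) (Fin n) ℝ | SparsePSD E Z} =
      {Z : Matrix (Fin n) (Fin n) ℝ |
        SparseSym E Z ∧ ∀ X : Matrix (Fin n) (Fin n) ℝ, PSDCompletable E X →
          0 ≤ (Z * X).trace}) := by
  refine ⟨Set.ext fun X => ⟨fun hX => ⟨hX.1, fun Z hZ => ?_⟩, fun ⟨hXs, h⟩ => ?_⟩,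
    Set.ext fun Z => ⟨fun hZ => ⟨hZ.1, fun X hX => hZ.trace_mul_nonneg hE hX⟩,
      fun ⟨hZs, h⟩ => ⟨hZs, hZs.posSemidef_of_forall_trace_mul_nonneg hE h⟩⟩⟩
  · rw [Matrix.trace_mul_comm]
    exact hZ.trace_mul_nonneg hE hX
  · exact hXs.psdCompletable_of_forall_trace_mul_nonneg hE h
end

section
/- Let G(V,E) be a chordal graph with maximal cliques C_1, …, C_p, and suppose C ∈ S^n(E,0) and A_i ∈ S^n(E,0) for i = 1, …, m. Then the optimal value of inf{⟨C,X⟩ : ⟨A_i,X⟩ = b_i for i = 1,…,m, X ∈ S^n_+(E,?)} equals the optimal value of the domain-space decomposed SDP inf{⟨C,X⟩ : ⟨A_i,X⟩ = b_i for i = 1,…,m, X_k = E_{C_k} X E_{C_k}^T and X_k ⪰ 0 for k = 1,…,p}, where the second infimum is over X ∈ S^n(E,0) and X_1 ∈ S^{|C_1|}, …, X_p ∈ S^{|C_p|}. -/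
open Matrix BigOperators

/-!
Both problems have the same feasible matrices `X`, so the content is the theorem of Grone,
Johnson, Sá and Wolkowicz: over a chordal graph, if every maximal-clique block `E_C X E_Cᵀ` is
positive semidefinite, then `X` has a positive semidefinite completion (the converse holds because
principal blocks of a PSD matrix are PSD).

The completion is built by induction on the number of edges. By Dirac's lemma a chordal graph with
an edge has a simplicial vertex `v`; deleting the edges at `v` leaves a chordal graph, and its
completion is extended to `v` through the neighbourhood of `v`, which together with `v` is a clique.
Dirac's lemma comes from a minimal separator `S` of two non-adjacent vertices `a`, `b`. It is a
clique, since for non-adjacent `x, y ∈ S` shortest `x`–`y` paths through the components of `a` and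
of `b` would glue to a chordless cycle; induction on the graph induced by `S` and one component
then gives a simplicial vertex in each of the two components.
-/

section LinearAlgebra

variable {ι : Type*}

def diagIndicator [DecidableEq ι] (S : Finset ι) : Matrix ι ι ℝ :=
  diagonal fun i => if i ∈ S then 1 else 0

theorem transpose_diagIndicator [DecidableEq ι] (S : Finset ι) :
    (diagIndicator S)ᵀ = diagIndicator S :=
  diagonal_transpose _

variable [Fintype ι]

theorem dotProduct_eq_of_eqOn {S : Finset ι} {c x y : ι → ℝ} (hc : ∀ i ∉ S, c i = 0)
    (hxy : ∀ i ∈ S, x i = y i) : c ⬝ᵥ x = c ⬝ᵥ y :=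
  Finset.sum_congr rfl fun i _ => by
    by_cases hi : i ∈ S
    · rw [hxy i hi]
    · simp [hc i hi]

theorem mulVec_apply_eq_of_eqOn {S : Finset ι} {A B : Matrix ι ι ℝ} {c : ι → ℝ}
    (hc : ∀ i ∉ S, c i = 0) {w : ι} (hAB : ∀ b ∈ S, A w b = B w b) :
    (A *ᵥ c) w = (B *ᵥ c) w := by
  simp only [mulVec]
  rw [dotProduct_comm, dotProduct_eq_of_eqOn hc hAB, dotProduct_comm]

theorem Matrix.IsHermitian.dotProduct_mulVec_comm {A : Matrix ι ι ℝ} (hA : A.IsHermitian)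
    (x y : ι → ℝ) : x ⬝ᵥ A *ᵥ y = y ⬝ᵥ A *ᵥ x := by
  rw [dotProduct_mulVec, ← mulVec_transpose, ← conjTranspose_eq_transpose_of_trivial, hA,
    dotProduct_comm]

variable [DecidableEq ι]

theorem Matrix.IsHermitian.exists_mulVec_eq {A : Matrix ι ι ℝ} (hA : A.IsHermitian) {x : ι → ℝ}
    (hx : ∀ z, A *ᵥ z = 0 → z ⬝ᵥ x = 0) : ∃ c, A *ᵥ c = x := by
  have hT : (toEuclideanLin A).IsSymmetric := isSymmetric_toEuclideanLin_iff.mpr hA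
  have hx' : WithLp.toLp 2 x ∈ (LinearMap.ker (toEuclideanLin A))ᗮ := by
    refine (Submodule.mem_orthogonal _ _).mpr fun z hz => ?_
    have hAz : A *ᵥ z.ofLp = 0 := by simpa using congrArg WithLp.ofLp hz
    simpa [EuclideanSpace.inner_eq_star_dotProduct, dotProduct_comm] using hx _ hAz
  rw [← hT.orthogonal_range, Submodule.orthogonal_orthogonal] at hx'
  obtain ⟨c, hc⟩ := hx'
  exact ⟨c.ofLp, by simpa using congrArg WithLp.ofLp hc⟩

theorem transpose_mul_mul_apply (A B : Matrix ι ι ℝ) (a b : ι) :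
    (Aᵀ * B * A) a b = (A *ᵥ Pi.single a 1) ⬝ᵥ B *ᵥ (A *ᵥ Pi.single b 1) :=
  calc (Aᵀ * B * A) a b = Pi.single a 1 ⬝ᵥ (Aᵀ * B * A) *ᵥ Pi.single b 1 := by simp
    _ = _ := by rw [← mulVec_mulVec, ← mulVec_mulVec, dotProduct_mulVec, vecMul_transpose]

theorem updateCol_one_mulVec_single (v : ι) (c : ι → ℝ) (a : ι) :
    (1 : Matrix ι ι ℝ).updateCol v c *ᵥ Pi.single a 1 = if a = v then c else Pi.single a 1 := by
  ext k
  rw [mulVec_single_one]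
  by_cases h : a = v
  · subst h; simp
  · simp [h, one_apply, Pi.single_apply]

theorem diagIndicator_mulVec (S : Finset ι) (y : ι → ℝ) (i : ι) :
    (diagIndicator S *ᵥ y) i = if i ∈ S then y i else 0 := by
  simp [diagIndicator, mulVec_diagonal]

def principalPart (S : Finset ι) (X : Matrix ι ι ℝ) : Matrix ι ι ℝ :=
  diagIndicator S * X * diagIndicator S

theorem principalPart_apply (S : Finset ι) (X : Matrix ι ι ℝ) (a b : ι) :
    principalPart S X a b = if a ∈ S ∧ b ∈ S then X a b else 0 := by
  by_cases ha : a ∈ S <;> by_cases hb : b ∈ S <;>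
    simp [principalPart, diagIndicator, diagonal_mul, mul_diagonal, ha, hb]

theorem posSemidef_principalPart {X : Matrix ι ι ℝ} (hX : X.PosSemidef) (S : Finset ι) :
    (principalPart S X).PosSemidef := by
  simpa [principalPart, conjTranspose_eq_transpose_of_trivial, transpose_diagIndicator]
    using hX.conjTranspose_mul_mul_same (diagIndicator S)

theorem principalPart_principalPart {S T : Finset ι} (h : S ⊆ T) (X : Matrix ι ι ℝ) :
    principalPart S (principalPart T X) = principalPart S X := by
  ext a b
  simp only [principalPart_apply]
  by_cases ha : a ∈ S <;> by_cases hb : b ∈ S <;> grind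

/-- `c = P c'` with `P` the coordinate projection onto `S` and `(P N P) c' = P N e_v`, which is
solvable because `P N e_v` is orthogonal to the kernel of `P N P`. Then `N (e_v - c)` vanishes on
`S`, whence `N_vv - cᵀ N c = (e_v - c)ᵀ N (e_v - c) ≥ 0`. -/
theorem Matrix.PosSemidef.exists_mulVec_eqOn_col {N : Matrix ι ι ℝ} (hN : N.PosSemidef) (v : ι)
    (S : Finset ι) :
    ∃ c : ι → ℝ, (∀ i ∉ S, c i = 0) ∧ (∀ w ∈ S, (N *ᵥ c) w = N w v) ∧
      c ⬝ᵥ N *ᵥ c ≤ N v v := by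
  set e : ι → ℝ := Pi.single v 1
  set P := diagIndicator S
  have hPsupp : ∀ y, ∀ i ∉ S, (P *ᵥ y) i = 0 := fun y i hi => by
    simp [P, diagIndicator_mulVec, hi]
  have hPeq : ∀ y, ∀ i ∈ S, (P *ᵥ y) i = y i := fun y i hi => by
    simp [P, diagIndicator_mulVec, hi]
  obtain ⟨c', hc'⟩ : ∃ c', principalPart S N *ᵥ c' = P *ᵥ (N *ᵥ e) := by
    refine (posSemidef_principalPart hN S).isHermitian.exists_mulVec_eq fun z hz => ?_
    have hNPz : N *ᵥ (P *ᵥ z) = 0 := by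
      have h0 : z ⬝ᵥ principalPart S N *ᵥ z = 0 := by rw [hz, dotProduct_zero]
      rw [principalPart, ← mulVec_mulVec, ← mulVec_mulVec, dotProduct_mulVec,
        ← P.mulVec_transpose, transpose_diagIndicator] at h0
      simpa [star_trivial] using (hN.dotProduct_mulVec_zero_iff (P *ᵥ z)).mp h0
    rw [dotProduct_mulVec, ← P.mulVec_transpose, transpose_diagIndicator,
      hN.isHermitian.dotProduct_mulVec_comm, hNPz, dotProduct_zero]
  set c := P *ᵥ c'
  have hNc : ∀ w ∈ S, (N *ᵥ c) w = N w v := fun w hw => by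
    have := congrFun hc' w
    rw [principalPart, ← mulVec_mulVec, ← mulVec_mulVec, hPeq _ w hw, hPeq _ w hw] at this
    exact this.trans (by simp [e])
  refine ⟨c, hPsupp c', hNc, ?_⟩
  have hzS : ∀ w ∈ S, (N *ᵥ (e - c)) w = 0 := fun w hw => by
    simp [mulVec_sub, hNc w hw, e]
  have hcz : c ⬝ᵥ N *ᵥ (e - c) = 0 := by
    rw [dotProduct_eq_of_eqOn (y := 0) (hPsupp c') hzS, dotProduct_zero]
  have hez : e ⬝ᵥ N *ᵥ (e - c) = N v v - c ⬝ᵥ N *ᵥ c := by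
    have hee : e ⬝ᵥ N *ᵥ e = N v v := by simp [e]
    rw [mulVec_sub, dotProduct_sub] at hcz ⊢
    rw [hN.isHermitian.dotProduct_mulVec_comm e c]
    linarith
  have hnonneg : 0 ≤ (e - c) ⬝ᵥ N *ᵥ (e - c) := by
    simpa [star_trivial] using hN.dotProduct_mulVec_nonneg (e - c)
  rw [sub_dotProduct, hez, hcz] at hnonneg
  linarith

/-- With `N c = N e_v` on `S` as above, take `M = Pᵀ M' P + (X_vv - cᵀ M' c) e_v e_vᵀ`, where `P`
is the identity with column `v` replaced by `c`; its row `v` is `M' c`, which agrees with `X`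
on `S`. -/
theorem Matrix.PosSemidef.exists_extension {M' X : Matrix ι ι ℝ} (hM' : M'.PosSemidef)
    {v : ι} {S : Finset ι} (hvS : v ∉ S) (hX : (principalPart (insert v S) X).PosSemidef)
    (hagree : ∀ a ∈ S, ∀ b ∈ S, M' a b = X a b) :
    ∃ M : Matrix ι ι ℝ, M.PosSemidef ∧ (∀ a b, a ≠ v → b ≠ v → M a b = M' a b) ∧
      ∀ w ∈ insert v S, M v w = X v w ∧ M w v = X w v := by
  set N := principalPart (insert v S) X
  have hN : ∀ a ∈ insert v S, ∀ b ∈ insert v S, N a b = X a b := fun a ha b hb => by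
    simp [N, principalPart_apply, ha, hb]
  obtain ⟨c, hcS, hNc, hcNc⟩ := hX.exists_mulVec_eqOn_col v S
  have hM'c : ∀ w ∈ S, (M' *ᵥ c) w = N w v := fun w hw =>
    (mulVec_apply_eq_of_eqOn hcS fun b hb => (hagree w hw b hb).trans
      (hN w (Finset.mem_insert_of_mem hw) b (Finset.mem_insert_of_mem hb)).symm).trans (hNc w hw)
  have hcM'c : c ⬝ᵥ M' *ᵥ c = c ⬝ᵥ N *ᵥ c :=
    dotProduct_eq_of_eqOn hcS fun w hw => (hM'c w hw).trans (hNc w hw).symm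
  set P := (1 : Matrix ι ι ℝ).updateCol v c
  have hP (a : ι) : P *ᵥ Pi.single a 1 = if a = v then c else Pi.single a 1 :=
    updateCol_one_mulVec_single v c a
  set d := N v v - c ⬝ᵥ M' *ᵥ c
  have hd : 0 ≤ d := by simp only [d]; linarith
  refine ⟨Pᵀ * M' * P + diagonal (Pi.single v d), ?_, ?_, ?_⟩
  · refine PosSemidef.add ?_ (PosSemidef.diagonal (Pi.single_nonneg.mpr hd))
    simpa [conjTranspose_eq_transpose_of_trivial] using hM'.conjTranspose_mul_mul_same P
  · intro a b ha hb
    rw [add_apply, transpose_mul_mul_apply, hP, hP, if_neg ha, if_neg hb]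
    simp [diagonal_apply, Pi.single_eq_of_ne ha]
  have hNsymm : ∀ a b, N a b = N b a := fun a b => by
    simpa using (hX.isHermitian.apply a b).symm
  intro w hw
  rcases Finset.mem_insert.mp hw with rfl | hwS
  · rw [add_apply, transpose_mul_mul_apply, hP, if_pos rfl]
    simp [d, hN w hw w hw]
  have hwv : w ≠ v := fun h => hvS (h ▸ hwS)
  have hXwv : X w v = N w v := (hN w hw v (Finset.mem_insert_self v S)).symm
  have hXvw : X v w = N w v := by rw [hNsymm, hN v (Finset.mem_insert_self v S) w hw]
  simp only [add_apply, transpose_mul_mul_apply, hP, if_true, if_neg hwv]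
  rw [hM'.isHermitian.dotProduct_mulVec_comm c]
  simp [hM'c w hwS, hXwv, hXvw, hwv, hwv.symm]

end LinearAlgebra

section Chordal

variable {n : ℕ} {E : Set (Fin n × Fin n)}

def IsSimplicial (E : Set (Fin n × Fin n)) (v : Fin n) : Prop :=
  ∀ a b, (v, a) ∈ E → (v, b) ∈ E → a ≠ b → (a, b) ∈ E

def inducedEdges (E : Set (Fin n × Fin n)) (p : Fin n → Prop) : Set (Fin n × Fin n) :=
  {q ∈ E | p q.1 ∧ p q.2}

theorem SymmEdges.induced (hE : SymmEdges E) (p : Fin n → Prop) :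
    SymmEdges (inducedEdges E p) :=
  fun i j h => ⟨hE i j h.1, h.2.2, h.2.1⟩

theorem IsChordal.induced (hch : IsChordal E) (p : Fin n → Prop) :
    IsChordal (inducedEdges E p) := by
  intro k hk v hv
  obtain ⟨i, j, hij, hji, hij', he⟩ := hch k hk v ⟨hv.1, fun i => (hv.2 i).1⟩
  exact ⟨i, j, hij, hji, hij', he, (hv.2 i).2.1, (hv.2 j).2.1⟩

theorem IsClique.mono {E' : Set (Fin n × Fin n)} (h : E' ⊆ E) {D : Finset (Fin n)}
    (hD : IsClique E' D) : IsClique E D :=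
  fun i hi j hj hij => h (hD i hi j hj hij)

theorem isClique_singleton (i : Fin n) : IsClique E {i} := by
  intro a ha b hb hab
  simp_all

theorem IsSimplicial.isClique_insert {v : Fin n} (hv : IsSimplicial E v) (hE : SymmEdges E)
    {S : Finset (Fin n)} (hS : ∀ w ∈ S, (v, w) ∈ E) : IsClique E (insert v S) := by
  intro a ha b hb hab
  rcases Finset.mem_insert.mp ha with rfl | haS <;> rcases Finset.mem_insert.mp hb with rfl | hbS
  · exact absurd rfl hab
  · exact hS b hbS
  · exact hE _ _ (hS a haS)
  · exact hv a b (hS a haS) (hS b hbS) hab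

def ReachIn (E : Set (Fin n × Fin n)) (B : Set (Fin n)) : Fin n → Fin n → Prop :=
  Relation.ReflTransGen fun u w => u ∈ B ∧ w ∈ B ∧ (u, w) ∈ E

def componentIn (E : Set (Fin n × Fin n)) (B : Set (Fin n)) (r : Fin n) : Set (Fin n) :=
  {w | w ∈ B ∧ ReachIn E B r w}

/-- `f 0 = x, f 1, …, f (len - 1) = y` is a walk (vertices may repeat) in `E` whose interior lies
in `K`. -/
def IsPathVia (E : Set (Fin n × Fin n)) (K : Set (Fin n)) (x y : Fin n) (f : ℕ → Fin n)
    (len : ℕ) : Prop :=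
  2 ≤ len ∧ f 0 = x ∧ f (len - 1) = y ∧ (∀ i, i + 1 < len → (f i, f (i + 1)) ∈ E) ∧
    ∀ i, 0 < i → i + 1 < len → f i ∈ K

def IsShortestPathVia (E : Set (Fin n × Fin n)) (K : Set (Fin n)) (x y : Fin n)
    (f : ℕ → Fin n) (len : ℕ) : Prop :=
  IsPathVia E K x y f len ∧ ∀ f' len', IsPathVia E K x y f' len' → len ≤ len'

theorem ReachIn.symm (hE : SymmEdges E) {B : Set (Fin n)} {u w : Fin n} (h : ReachIn E B u w) :
    ReachIn E B w u := by
  induction h with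
  | refl => exact .refl
  | tail _ hbc ih => exact .head ⟨hbc.2.1, hbc.1, hE _ _ hbc.2.2⟩ ih

theorem ReachIn.exists_walk {B : Set (Fin n)} {u w : Fin n} (hu : u ∈ B) (h : ReachIn E B u w) :
    ∃ (f : ℕ → Fin n) (len : ℕ), 1 ≤ len ∧ f 0 = u ∧ f (len - 1) = w ∧
      (∀ i, i + 1 < len → (f i, f (i + 1)) ∈ E) ∧ ∀ i, i < len → f i ∈ B := by
  induction h with
  | refl => exact ⟨fun _ => u, 1, le_rfl, rfl, rfl, fun i hi => by omega, fun _ _ => hu⟩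
  | @tail b c _ hbc ih =>
    obtain ⟨f, len, h1, h0, hlast, hadj, hB⟩ := ih
    refine ⟨fun i => if i < len then f i else c, len + 1, by omega,
      by simp [show 0 < len by omega, h0], by simp, fun i hi => ?_, fun i hi => ?_⟩
    · rcases Nat.lt_or_ge (i + 1) len with h | h
      · simpa [h, show i < len by omega] using hadj i h
      · have hi : i = len - 1 := by omega
        simpa [hi, show len - 1 < len by omega, show ¬ len - 1 + 1 < len by omega, hlast]
          using hbc.2.2
    · by_cases h : i < len
      · simpa [h] using hB i h
      · simpa [h] using hbc.2.1

theorem IsPathVia.skip {K : Set (Fin n)} {x y : Fin n} {f : ℕ → Fin n} {len p o : ℕ}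
    (hf : IsPathVia E K x y f len) (hpo : p + o + 1 < len)
    (he : (f p, f (p + o + 1)) ∈ E) :
    IsPathVia E K x y (fun i => if i ≤ p then f i else f (i + o)) (len - o) := by
  obtain ⟨hlen, hx, hy, hadj, hK⟩ := hf
  refine ⟨by omega, by simpa using hx, ?_, fun i hi => ?_, fun i h0 hi => ?_⟩
  · simpa [show ¬ len - o - 1 ≤ p by omega, show len - o - 1 + o = len - 1 by omega] using hy
  · rcases lt_trichotomy i p with h | rfl | h
    · simpa [h.le, show i + 1 ≤ i + 1 by omega, show i + 1 ≤ p by omega] using hadj i (by omega)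
    · simpa [show i + 1 + o = i + o + 1 by omega] using he
    · simpa [show ¬ i ≤ p by omega, show ¬ i + 1 ≤ p by omega,
        show i + 1 + o = i + o + 1 by omega] using hadj (i + o) (by omega)
  · by_cases h : i ≤ p
    · simpa [h] using hK i h0 (by omega)
    · simpa [h] using hK (i + o) (by omega) (by omega)

theorem exists_isShortestPathVia {K : Set (Fin n)} {x y : Fin n}
    (h : ∃ f len, IsPathVia E K x y f len) : ∃ f len, IsShortestPathVia E K x y f len := by
  classical
  have hP : ∃ len f, IsPathVia E K x y f len := let ⟨f, len, hf⟩ := h; ⟨len, f, hf⟩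
  obtain ⟨f, hf⟩ := Nat.find_spec hP
  exact ⟨f, Nat.find hP, hf, fun f' len' h' => Nat.find_min' hP ⟨f', h'⟩⟩

namespace IsShortestPathVia

variable {K : Set (Fin n)} {x y : Fin n} {f : ℕ → Fin n} {len : ℕ}

theorem not_adj (hf : IsShortestPathVia E K x y f len) {p q : ℕ} (hpq : p + 2 ≤ q)
    (hq : q < len) : (f p, f q) ∉ E := fun he => by
  have := hf.2 _ _ (hf.1.skip (p := p) (o := q - p - 1) (by omega)
    (by rwa [show p + (q - p - 1) + 1 = q by omega]))
  omega

theorem injOn (hf : IsShortestPathVia E K x y f len) (hxy : x ≠ y) {p q : ℕ} (hpq : p < q)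
    (hq : q < len) : f p ≠ f q := fun heq => by
  obtain ⟨⟨hlen, hx, hy, hadj, hK⟩, hmin⟩ := hf
  rcases Nat.lt_or_ge (q + 1) len with hq1 | hq1
  · have := hmin _ _ ((IsPathVia.skip ⟨hlen, hx, hy, hadj, hK⟩ (p := p) (o := q - p) (by omega))
      (by rw [show p + (q - p) + 1 = q + 1 by omega, heq]; exact hadj q hq1))
    omega
  · have hfp : f p = y := by rw [heq, show q = len - 1 by omega, hy]
    rcases Nat.eq_zero_or_pos p with rfl | hp
    · exact hxy (hx ▸ hfp)
    · have := hmin f (p + 1) ⟨by omega, hx, by simpa using hfp, fun i hi => hadj i (by omega),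
        fun i h0 hi => hK i h0 (by omega)⟩
      omega

theorem three_le (hf : IsShortestPathVia E K x y f len) (hxy : (x, y) ∉ E) : 3 ≤ len := by
  obtain ⟨⟨hlen, hx, hy, hadj, -⟩, -⟩ := hf
  by_contra h
  have h2 : len = 2 := by omega
  subst h2
  exact hxy (hx ▸ hy ▸ hadj 0 (by omega))

end IsShortestPathVia

theorem exists_isPathVia_of_reachIn {K : Set (Fin n)} {x y u u' : Fin n} (hxu : (x, u) ∈ E)
    (hu'y : (u', y) ∈ E) (hu : u ∈ K) (hreach : ReachIn E K u u') :
    ∃ f len, IsPathVia E K x y f len := by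
  obtain ⟨g, len, h1, h0, hlast, hadj, hK⟩ := hreach.exists_walk hu
  refine ⟨fun i => if i = 0 then x else if i ≤ len then g (i - 1) else y, len + 2,
    by omega, by simp, by simp, fun i hi => ?_, fun i h0 hi => ?_⟩
  · rcases Nat.eq_zero_or_pos i with rfl | hi0
    · simpa [h1, h0] using hxu
    · rcases Nat.lt_or_ge i len with h | h
      · simpa [show i ≠ 0 by omega, show i ≤ len by omega, show i + 1 ≤ len by omega,
          show i + 1 - 1 = i - 1 + 1 by omega] using hadj (i - 1) (by omega)
      · have hil : i = len := by omega
        subst hil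
        simpa [show i ≠ 0 by omega, hlast] using hu'y
  · simpa [show i ≠ 0 by omega, show i ≤ len by omega] using hK (i - 1) (by omega)

theorem ReachIn.componentIn {B : Set (Fin n)} {r u w : Fin n} (hu : u ∈ componentIn E B r)
    (h : ReachIn E B u w) : ReachIn E (componentIn E B r) u w := by
  induction h with
  | refl => exact Relation.ReflTransGen.refl
  | @tail y z hy hyz ih =>
    exact ih.tail ⟨⟨hyz.1, hu.2.trans hy⟩, ⟨hyz.2.1, hu.2.trans (hy.tail hyz)⟩, hyz.2.2⟩

theorem IsChordal.exists_chord (hE : SymmEdges E) (hch : IsChordal E) {c : ℕ} (hc : 4 ≤ c)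
    {v : ℕ → Fin n} (hinj : ∀ p q, p < q → q < c → v p ≠ v q)
    (hadj : ∀ p, p + 1 < c → (v p, v (p + 1)) ∈ E) (hwrap : (v (c - 1), v 0) ∈ E) :
    ∃ p q, p + 2 ≤ q ∧ q < c ∧ ¬(p = 0 ∧ q = c - 1) ∧ (v p, v q) ∈ E := by
  obtain ⟨k, rfl⟩ : ∃ k, c = k + 1 := ⟨c - 1, by omega⟩
  have hcyc : IsCycle E fun i : Fin (k + 1) => v i := by
    refine ⟨fun i j hij => ?_, fun i => ?_⟩
    · by_contra hne
      rcases lt_or_gt_of_ne (Fin.val_ne_of_ne hne) with h | h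
      · exact hinj _ _ h j.2 hij
      · exact hinj _ _ h i.2 hij.symm
    · by_cases hi : i = Fin.last k
      · simpa [Fin.val_add_one, hi] using hwrap
      · simpa [Fin.val_add_one, hi] using hadj i (by have := Fin.val_lt_last hi; omega)
  obtain ⟨i, j, hij, hji, hij', he⟩ := hch k hc _ hcyc
  have key : ∀ i j : Fin (k + 1), j ≠ i + 1 → i ≠ j + 1 → (i : ℕ) < j → (v i, v j) ∈ E →
      ∃ p q, p + 2 ≤ q ∧ q < k + 1 ∧ ¬(p = 0 ∧ q = k + 1 - 1) ∧ (v p, v q) ∈ E := by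
    intro i j hji hij hlt he
    have hi : i ≠ Fin.last k := fun h => by have := j.2; simp [h] at hlt; omega
    refine ⟨i, j, ?_, j.2, ?_, he⟩
    · have : (j : ℕ) ≠ i + 1 := fun h => hji (Fin.ext (by simp [Fin.val_add_one, hi, h]))
      omega
    · rintro ⟨h0, hk⟩
      exact hij (Fin.ext (by simp [show j = Fin.last k from Fin.ext (by simpa using hk), h0]))
  rcases lt_or_gt_of_ne (Fin.val_ne_of_ne hij) with h | h
  · exact key i j hji hij' h he
  · exact key j i hij' hji h (hE _ _ he)

section GlueCycle

/-- The closed walk `fa 0, …, fa (ra - 1), fb (rb - 2), …, fb 1`. -/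
def glueCycle (fa fb : ℕ → Fin n) (ra rb : ℕ) (p : ℕ) : Fin n :=
  if p < ra then fa p else fb (ra + rb - 2 - p)

variable {Ka Kb : Set (Fin n)} {x y : Fin n} {fa fb : ℕ → Fin n} {ra rb : ℕ}

theorem glueCycle_of_lt {p : ℕ} (hp : p < ra) : glueCycle fa fb ra rb p = fa p := if_pos hp

theorem glueCycle_of_le (hfa : IsPathVia E Ka x y fa ra) (hfb : IsPathVia E Kb x y fb rb) {p : ℕ}
    (hp : ra - 1 ≤ p) (hpc : p < ra + rb - 2) :
    glueCycle fa fb ra rb p = fb (ra + rb - 2 - p) := by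
  by_cases h : p < ra
  · rw [glueCycle_of_lt h, show p = ra - 1 by omega, hfa.2.2.1,
      show ra + rb - 2 - (ra - 1) = rb - 1 by omega, hfb.2.2.1]
  · exact if_neg h

theorem isCycle_glueCycle (hE : SymmEdges E) (hnoedge : ∀ z ∈ Ka, ∀ w ∈ Kb, z ≠ w ∧ (z, w) ∉ E)
    (hxy : x ≠ y) (hxK : x ∉ Kb) (hyK : y ∉ Kb)
    (hfa : IsShortestPathVia E Ka x y fa ra) (hfb : IsShortestPathVia E Kb x y fb rb) :
    (∀ p q, p < q → q < ra + rb - 2 → glueCycle fa fb ra rb p ≠ glueCycle fa fb ra rb q) ∧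
    (∀ p, p + 1 < ra + rb - 2 →
      (glueCycle fa fb ra rb p, glueCycle fa fb ra rb (p + 1)) ∈ E) ∧
    (glueCycle fa fb ra rb (ra + rb - 2 - 1), glueCycle fa fb ra rb 0) ∈ E := by
  obtain ⟨hra, hxa, hya, hadja, hKa⟩ := hfa.1
  obtain ⟨hrb, hxb, -, hadjb, hKb⟩ := hfb.1
  have hvb : ∀ {p}, ra - 1 ≤ p → p < ra + rb - 2 →
      glueCycle fa fb ra rb p = fb (ra + rb - 2 - p) :=
    glueCycle_of_le hfa.1 hfb.1
  refine ⟨fun p q hpq hq heq => ?_, fun p hp => ?_, ?_⟩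
  · by_cases hqa : q < ra
    · rw [glueCycle_of_lt (by omega), glueCycle_of_lt hqa] at heq
      exact hfa.injOn hxy hpq hqa heq
    have hvq : glueCycle fa fb ra rb q ∈ Kb := by
      rw [hvb (by omega) hq]; exact hKb _ (by omega) (by omega)
    by_cases hpa : p < ra
    · rw [← heq, glueCycle_of_lt hpa] at hvq
      rcases Nat.eq_zero_or_pos p with rfl | hp0
      · exact hxK (hxa ▸ hvq)
      · rcases Nat.lt_or_ge (p + 1) ra with hp1 | hp1
        · exact (hnoedge _ (hKa p hp0 hp1) _ hvq).1 rfl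
        · exact hyK (by rwa [show p = ra - 1 by omega, hya] at hvq)
    · rw [hvb (by omega) (by omega), hvb (by omega) hq] at heq
      exact hfb.injOn hxy (show ra + rb - 2 - q < ra + rb - 2 - p by omega) (by omega) heq.symm
  · by_cases h : p + 1 < ra
    · rw [glueCycle_of_lt (by omega), glueCycle_of_lt h]; exact hadja p h
    · rw [hvb (by omega) (by omega), hvb (by omega) hp]
      refine hE _ _ ?_
      simpa [show ra + rb - 2 - p = ra + rb - 2 - (p + 1) + 1 by omega]
        using hadjb (ra + rb - 2 - (p + 1)) (by omega)
  · rw [hvb (by omega) (by omega), glueCycle_of_lt (by omega), hxa, ← hxb,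
      show ra + rb - 2 - (ra + rb - 2 - 1) = 0 + 1 by omega]
    exact hE _ _ (hadjb 0 (by omega))

/-- If `x` and `y` were not adjacent, the two paths would glue to a chordless cycle of length at
least four. -/
theorem IsChordal.adj_of_isShortestPathVia (hE : SymmEdges E) (hch : IsChordal E)
    (hnoedge : ∀ z ∈ Ka, ∀ w ∈ Kb, z ≠ w ∧ (z, w) ∉ E) (hxy : x ≠ y) (hxK : x ∉ Kb)
    (hyK : y ∉ Kb) (hfa : IsShortestPathVia E Ka x y fa ra)
    (hfb : IsShortestPathVia E Kb x y fb rb) : (x, y) ∈ E := by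
  by_contra hnadj
  have hra := hfa.three_le hnadj
  have hrb := hfb.three_le hnadj
  obtain ⟨hinj, hadj, hwrap⟩ := isCycle_glueCycle hE hnoedge hxy hxK hyK hfa hfb
  obtain ⟨p, q, hpq, hq, hne, he⟩ := hch.exists_chord hE (by omega) hinj hadj hwrap
  by_cases hqa : q < ra
  · rw [glueCycle_of_lt (by omega), glueCycle_of_lt hqa] at he
    exact hfa.not_adj hpq hqa he
  rw [glueCycle_of_le hfa.1 hfb.1 (by omega) hq] at he
  by_cases hpa : ra - 1 ≤ p
  · rw [glueCycle_of_le hfa.1 hfb.1 hpa (by omega)] at he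
    exact hfb.not_adj (show ra + rb - 2 - q + 2 ≤ ra + rb - 2 - p by omega) (by omega)
      (hE _ _ he)
  rw [glueCycle_of_lt (by omega)] at he
  rcases Nat.eq_zero_or_pos p with rfl | hp0
  · rw [hfa.1.2.1, ← hfb.1.2.1] at he
    exact hfb.not_adj (show 0 + 2 ≤ ra + rb - 2 - q by omega) (by omega) he
  · exact (hnoedge _ (hfa.1.2.2.2.2 p hp0 (by omega)) _
      (hfb.1.2.2.2.2 _ (by omega) (by omega))).2 he

end GlueCycle

section Separators

variable {A S : Finset (Fin n)} {a b : Fin n}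

structure IsSeparator (E : Set (Fin n × Fin n)) (A : Finset (Fin n)) (a b : Fin n)
    (S : Finset (Fin n)) : Prop where
  subset : S ⊆ A
  left_mem : a ∈ (↑A \ ↑S : Set (Fin n))
  right_mem : b ∈ (↑A \ ↑S : Set (Fin n))
  not_reachIn : ¬ ReachIn E (↑A \ ↑S) a b

def IsMinimalSeparator (E : Set (Fin n × Fin n)) (A : Finset (Fin n)) (a b : Fin n)
    (S : Finset (Fin n)) : Prop :=
  IsSeparator E A a b S ∧ ∀ x ∈ S, ¬ IsSeparator E A a b (S.erase x)

theorem IsSeparator.symm (hE : SymmEdges E) (hS : IsSeparator E A a b S) :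
    IsSeparator E A b a S :=
  ⟨hS.subset, hS.right_mem, hS.left_mem, fun h => hS.not_reachIn (h.symm hE)⟩

theorem IsMinimalSeparator.symm (hE : SymmEdges E) (hS : IsMinimalSeparator E A a b S) :
    IsMinimalSeparator E A b a S :=
  ⟨hS.1.symm hE, fun x hx h => hS.2 x hx (h.symm hE)⟩

theorem exists_isMinimalSeparator (ha : a ∈ A) (hb : b ∈ A) (hab : a ≠ b) (hnadj : (a, b) ∉ E) :
    ∃ S, IsMinimalSeparator E A a b S := by
  classical
  have hS₀ : IsSeparator E A a b ((A.erase a).erase b) := by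
    refine ⟨(Finset.erase_subset _ _).trans (Finset.erase_subset _ _), by simp [ha],
      by simp [hb], ?_⟩
    suffices ∀ z, ReachIn E (↑A \ ↑((A.erase a).erase b)) a z → z = a from
      fun h => hab (this b h).symm
    intro z hz
    induction hz with
    | refl => rfl
    | @tail y z _ hyz ih =>
      subst ih
      by_contra hza
      have hzb : z ≠ b := fun h => hnadj (h ▸ hyz.2.2)
      exact hyz.2.1.2 (by simp [hza, hzb, hyz.2.1.1])
  obtain ⟨S, hSmem, hSmin⟩ := Finset.exists_min_image
    (A.powerset.filter (IsSeparator E A a b)) Finset.card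
    ⟨_, Finset.mem_filter.mpr ⟨Finset.mem_powerset.mpr hS₀.1, hS₀⟩⟩
  obtain ⟨-, hS⟩ := Finset.mem_filter.mp hSmem
  refine ⟨S, hS, fun x hx hsep => ?_⟩
  have := hSmin _ (Finset.mem_filter.mpr ⟨Finset.mem_powerset.mpr hsep.subset, hsep⟩)
  have := Finset.card_erase_lt_of_mem hx
  omega

theorem componentIn_of_adj {B : Set (Fin n)} {r z w : Fin n} (hz : z ∈ componentIn E B r)
    (hw : w ∈ B) (he : (z, w) ∈ E) : w ∈ componentIn E B r :=
  ⟨hw, hz.2.tail ⟨hz.1, hw, he⟩⟩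

theorem IsSeparator.ne_and_not_adj (hE : SymmEdges E) (hS : IsSeparator E A a b S) {u w : Fin n}
    (hu : u ∈ componentIn E (↑A \ ↑S) a) (hw : w ∈ componentIn E (↑A \ ↑S) b) :
    u ≠ w ∧ (u, w) ∉ E := by
  have hba : ¬ ReachIn E (↑A \ ↑S) b u := fun h => hS.not_reachIn (hu.2.trans (h.symm hE))
  exact ⟨fun h => hba (h ▸ hw.2), fun he => hba (componentIn_of_adj hw hu.1 (hE _ _ he)).2⟩

/-- If `x ∈ S` had no neighbour in the component of `a`, that component would stay closed after
returning `x` to the graph, so `S.erase x` would still separate. -/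
theorem IsMinimalSeparator.exists_adj (hE : SymmEdges E) (hS : IsMinimalSeparator E A a b S)
    {x : Fin n} (hx : x ∈ S) : ∃ u ∈ componentIn E (↑A \ ↑S) a, (x, u) ∈ E := by
  classical
  by_contra! hno
  have hsub : (↑A \ ↑S : Set (Fin n)) ⊆ ↑A \ ↑(S.erase x) :=
    Set.sdiff_subset_sdiff_right (Finset.coe_subset.mpr (Finset.erase_subset x S))
  refine hS.2 x hx ⟨(Finset.erase_subset _ _).trans hS.1.subset, hsub hS.1.left_mem,
    hsub hS.1.right_mem, fun hab => ?_⟩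
  suffices ∀ w, ReachIn E (↑A \ ↑(S.erase x)) a w → w ∈ componentIn E (↑A \ ↑S) a from
    hS.1.not_reachIn (this b hab).2
  intro w hw
  induction hw with
  | refl => exact ⟨hS.1.left_mem, .refl⟩
  | @tail y z _ hyz ih =>
    have hzx : z ≠ x := fun h => hno y ih (hE _ _ (h ▸ hyz.2.2))
    exact componentIn_of_adj ih
      ⟨hyz.2.1.1, fun hzS => hyz.2.1.2 (by simpa [hzx] using hzS)⟩ hyz.2.2

theorem IsMinimalSeparator.isClique (hE : SymmEdges E) (hch : IsChordal E)
    (hS : IsMinimalSeparator E A a b S) : IsClique E S := by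
  intro x hx y hy hxy
  by_contra hnadj
  have hpath : ∀ {r s}, IsMinimalSeparator E A r s S →
      ∃ f len, IsPathVia E (componentIn E (↑A \ ↑S) r) x y f len := by
    intro r s hrs
    obtain ⟨u, hu, hxu⟩ := hrs.exists_adj hE hx
    obtain ⟨w, hw, hyw⟩ := hrs.exists_adj hE hy
    exact exists_isPathVia_of_reachIn hxu (hE _ _ hyw) hu
      (ReachIn.componentIn hu ((hu.2.symm hE).trans hw.2))
  obtain ⟨fa, ra, hfa⟩ := exists_isShortestPathVia (hpath hS)
  obtain ⟨fb, rb, hfb⟩ := exists_isShortestPathVia (hpath (hS.symm hE))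
  exact hnadj (hch.adj_of_isShortestPathVia hE (fun z hz w hw => hS.1.ne_and_not_adj hE hz hw)
    hxy (fun h => h.1.2 hx) (fun h => h.1.2 hy) hfa hfb)

end Separators

def CompleteOrTwoSimplicial (E : Set (Fin n × Fin n)) (A : Finset (Fin n)) : Prop :=
  IsClique E A ∨
    ∃ u₁ ∈ A, ∃ u₂ ∈ A, u₁ ≠ u₂ ∧ (u₁, u₂) ∉ E ∧ IsSimplicial E u₁ ∧ IsSimplicial E u₂

/-- Every neighbour of the component `K` of `r` lies in `S ∪ K`, so a vertex of `K` that is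
simplicial in the graph induced on `S ∪ K` is simplicial; and since `S` is a clique, two
non-adjacent simplicial vertices of that graph cannot both lie in `S`. -/
theorem exists_isSimplicial_mem_componentIn {A S A' : Finset (Fin n)}
    (hsub : ∀ e ∈ E, e.1 ∈ A ∧ e.2 ∈ A) (hScl : IsClique E S) {r : Fin n}
    (hr : r ∈ (↑A \ ↑S : Set (Fin n)))
    (hA' : (↑A' : Set (Fin n)) = ↑S ∪ componentIn E (↑A \ ↑S) r)
    (hdirac : CompleteOrTwoSimplicial (inducedEdges E (· ∈ A')) A') :
    ∃ u ∈ componentIn E (↑A \ ↑S) r, IsSimplicial E u := by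
  set K := componentIn E (↑A \ ↑S) r
  have hmem : ∀ z, z ∈ A' ↔ z ∈ S ∨ z ∈ K := fun z => by
    rw [← Finset.mem_coe, hA']; rfl
  have hnbr : ∀ z ∈ K, ∀ w, (z, w) ∈ E → w ∈ A' := fun z hz w he => by
    by_cases hw : w ∈ S
    · exact (hmem w).2 (Or.inl hw)
    · exact (hmem w).2 (Or.inr (componentIn_of_adj hz ⟨(hsub _ he).2, hw⟩ he))
  have hlift : ∀ z ∈ K, IsSimplicial (inducedEdges E (· ∈ A')) z → IsSimplicial E z :=
    fun z hz hs c d hc hd hcd => (hs c d ⟨hc, (hmem z).2 (Or.inr hz), hnbr z hz c hc⟩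
      ⟨hd, (hmem z).2 (Or.inr hz), hnbr z hz d hd⟩ hcd).1
  rcases hdirac with hcl | ⟨u₁, h₁, u₂, h₂, hne, hnadj, hs₁, hs₂⟩
  · have hrK : r ∈ K := ⟨hr, .refl⟩
    exact ⟨r, hrK, fun c d hc hd hcd =>
      (hcl c (hnbr r hrK c hc) d (hnbr r hrK d hd) hcd).1⟩
  · rcases (hmem u₁).1 h₁ with hS₁ | hK₁
    · rcases (hmem u₂).1 h₂ with hS₂ | hK₂
      · exact absurd ⟨hScl u₁ hS₁ u₂ hS₂ hne, h₁, h₂⟩ hnadj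
      · exact ⟨u₂, hK₂, hlift u₂ hK₂ hs₂⟩
    · exact ⟨u₁, hK₁, hlift u₁ hK₁ hs₁⟩

/-- Dirac's lemma. -/
theorem IsChordal.completeOrTwoSimplicial (hE : SymmEdges E) (hch : IsChordal E)
    {A : Finset (Fin n)} (hsub : ∀ e ∈ E, e.1 ∈ A ∧ e.2 ∈ A) : CompleteOrTwoSimplicial E A := by
  classical
  induction hk : A.card using Nat.strong_induction_on generalizing E A with
  | _ k ih =>
  by_cases hcl : IsClique E A
  · exact Or.inl hcl
  obtain ⟨a, ha, b, hb, hab, hnadj⟩ : ∃ a ∈ A, ∃ b ∈ A, a ≠ b ∧ (a, b) ∉ E := by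
    simpa [IsClique] using hcl
  obtain ⟨S, hS⟩ := exists_isMinimalSeparator (E := E) ha hb hab hnadj
  have hScl := hS.isClique hE hch
  have hside : ∀ {r s}, IsMinimalSeparator E A r s S →
      ∃ u ∈ componentIn E (↑A \ ↑S) r, IsSimplicial E u := by
    intro r s hrs
    set A' := A.filter fun z => z ∈ S ∨ z ∈ componentIn E (↑A \ ↑S) r
    have hA' : (↑A' : Set (Fin n)) = ↑S ∪ componentIn E (↑A \ ↑S) r := by
      ext z
      simp only [A', Finset.coe_filter, Set.mem_ofPred_eq, Set.mem_union, Finset.mem_coe]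
      exact ⟨fun h => h.2, fun h => ⟨h.elim (fun hz => hrs.1.subset hz) (fun hz => hz.1.1), h⟩⟩
    have hlt : A'.card < k := hk ▸ Finset.card_lt_card (Finset.filter_ssubset.mpr
      ⟨s, hrs.1.right_mem.1, fun h => h.elim hrs.1.right_mem.2 fun hs => hrs.1.not_reachIn hs.2⟩)
    exact exists_isSimplicial_mem_componentIn hsub hScl hrs.1.left_mem hA'
      (ih _ hlt (hE.induced _) (hch.induced _) (fun e he => he.2) rfl)
  obtain ⟨u₁, h₁, hs₁⟩ := hside hS
  obtain ⟨u₂, h₂, hs₂⟩ := hside (hS.symm hE)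
  have := hS.1.ne_and_not_adj hE h₁ h₂
  exact Or.inr ⟨u₁, h₁.1.1, u₂, h₂.1.1, this.1, this.2, hs₁, hs₂⟩

theorem IsChordal.exists_isSimplicial (hE : SymmEdges E) (hch : IsChordal E) (hne : E.Nonempty) :
    ∃ v, (∃ w, (v, w) ∈ E) ∧ IsSimplicial E v := by
  classical
  obtain ⟨⟨v₀, w₀⟩, he₀⟩ := hne
  set U := Finset.univ.filter fun v => ∃ w, (v, w) ∈ E
  have hU : ∀ v w, (v, w) ∈ E → v ∈ U := fun v w h => by simpa [U] using ⟨w, h⟩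
  rcases hch.completeOrTwoSimplicial hE (A := U) fun e he => ⟨hU _ _ he, hU _ _ (hE _ _ he)⟩ with
    hcl | ⟨u, hu, -, -, -, -, hs, -⟩
  · exact ⟨v₀, ⟨w₀, he₀⟩, fun c d hc hd hcd =>
      hcl c (hU _ _ (hE _ _ hc)) d (hU _ _ (hE _ _ hd)) hcd⟩
  · exact ⟨u, by simpa [U] using hu, hs⟩

/-- Grone, Johnson, Sá and Wolkowicz. -/
theorem IsChordal.exists_posSemidef_completion (hE : SymmEdges E) (hch : IsChordal E)
    (X : Matrix (Fin n) (Fin n) ℝ) (hX : ∀ D, IsClique E D → (principalPart D X).PosSemidef) :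
    ∃ M : Matrix (Fin n) (Fin n) ℝ, M.PosSemidef ∧ ∀ i j, (i, j) ∈ EStar E → M i j = X i j := by
  classical
  induction hk : E.ncard using Nat.strong_induction_on generalizing E with
  | _ k ih =>
  rcases E.eq_empty_or_nonempty with rfl | hne
  · refine ⟨diagonal fun i => X i i, PosSemidef.diagonal fun i => ?_, ?_⟩
    · simpa [principalPart_apply] using
        (hX {i} (isClique_singleton i)).diag_nonneg (i := i)
    · rintro i j (h | h)
      · exact absurd h (Set.notMem_empty _)
      · obtain rfl : i = j := h
        simp
  obtain ⟨v, ⟨w₀, hvw₀⟩, hv⟩ := hch.exists_isSimplicial hE hne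
  set E' := inducedEdges E (· ≠ v)
  have hE'E : E' ⊆ E := fun _ h => h.1
  have hlt : E'.ncard < k := hk ▸ Set.ncard_lt_ncard
    ⟨hE'E, fun h => (h hvw₀).2.1 rfl⟩ (Set.toFinite E)
  obtain ⟨M', hM', hM'X⟩ := ih _ hlt (hE.induced _) (hch.induced _)
    (fun D hD => hX D (hD.mono hE'E)) rfl
  set S := Finset.univ.filter fun w => (v, w) ∈ E ∧ w ≠ v
  have hS : ∀ w, w ∈ S ↔ (v, w) ∈ E ∧ w ≠ v := by simp [S]
  have hM'X' : ∀ i j, (i, j) ∈ EStar E → i ≠ v → j ≠ v → M' i j = X i j :=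
    fun i j hij hi hj => hM'X i j (hij.imp (fun h => ⟨h, hi, hj⟩) id)
  obtain ⟨M, hM, hMM', hMX⟩ := hM'.exists_extension (fun h => ((hS v).1 h).2 rfl)
    (hX _ (hv.isClique_insert hE fun w hw => ((hS w).1 hw).1)) fun a ha b hb => by
      by_cases hab : a = b
      · exact hM'X' a b (Or.inr hab) ((hS a).1 ha).2 ((hS b).1 hb).2
      · exact hM'X' a b (Or.inl (hv a b ((hS a).1 ha).1 ((hS b).1 hb).1 hab))
          ((hS a).1 ha).2 ((hS b).1 hb).2
  refine ⟨M, hM, fun i j hij => ?_⟩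
  have hmem : ∀ w, (v, w) ∈ EStar E → w ∈ insert v S := fun w hw => by
    by_cases hwv : w = v
    · exact hwv ▸ Finset.mem_insert_self v S
    · exact Finset.mem_insert_of_mem ((hS w).2 ⟨hw.resolve_right (Ne.symm hwv), hwv⟩)
  by_cases hi : i = v
  · subst hi; exact (hMX j (hmem j hij)).1
  by_cases hj : j = v
  · subst hj
    exact (hMX i (hmem i (hij.imp (hE _ _) Eq.symm))).2
  · rw [hMM' i j hi hj, hM'X' i j hij hi hj]

end Chordal

section Decomposition

variable {n : ℕ} {E : Set (Fin n × Fin n)}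

theorem sum_orderEmbOfFin (C : Finset (Fin n)) (f : Fin n → ℝ) :
    ∑ i, f (C.orderEmbOfFin rfl i) = ∑ x ∈ C, f x := by
  rw [← Finset.sum_image fun i _ j _ h => (C.orderEmbOfFin rfl).injective h,
    C.image_orderEmbOfFin_univ]

theorem selector_transpose_mul_selector (C : Finset (Fin n)) :
    (selector C)ᵀ * selector C = diagIndicator C := by
  ext a b
  simp only [mul_apply, transpose_apply, selector, of_apply, diagIndicator, diagonal_apply]
  refine (sum_orderEmbOfFin C fun x => (if x = a then 1 else 0) * if x = b then 1 else 0).trans ?_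
  by_cases hab : a = b
  · simp [hab]
  · simp [hab, Ne.symm hab]

theorem selector_mul_transpose_selector (C : Finset (Fin n)) :
    selector C * (selector C)ᵀ = 1 := by
  ext i j
  simp only [mul_apply, transpose_apply, selector, of_apply, ite_mul, one_mul, zero_mul,
    Finset.sum_ite_eq, Finset.mem_univ, if_true, one_apply]
  simp [eq_comm]

theorem principalPart_eq_selector (C : Finset (Fin n)) (X : Matrix (Fin n) (Fin n) ℝ) :
    principalPart C X = (selector C)ᵀ * (selector C * X * (selector C)ᵀ) * selector C := by
  simp only [principalPart, ← selector_transpose_mul_selector, Matrix.mul_assoc]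

theorem selector_mul_principalPart_mul (C : Finset (Fin n)) (X : Matrix (Fin n) (Fin n) ℝ) :
    selector C * principalPart C X * (selector C)ᵀ = selector C * X * (selector C)ᵀ := by
  have h : selector C * diagIndicator C = selector C := by
    rw [← selector_transpose_mul_selector, ← Matrix.mul_assoc, selector_mul_transpose_selector,
      Matrix.one_mul]
  have h' : diagIndicator C * (selector C)ᵀ = (selector C)ᵀ := by
    rw [← transpose_diagIndicator, ← transpose_mul, h]
  rw [principalPart, ← Matrix.mul_assoc, ← Matrix.mul_assoc, h,
    Matrix.mul_assoc _ (diagIndicator C), h']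

theorem IsClique.mem_eStar {C : Finset (Fin n)} (hC : IsClique E C) {a b : Fin n} (ha : a ∈ C)
    (hb : b ∈ C) : (a, b) ∈ EStar E := by
  by_cases hab : a = b
  · exact Or.inr hab
  · exact Or.inl (hC a ha b hb hab)

theorem IsClique.exists_isMaximalClique_superset {D : Finset (Fin n)} (hD : IsClique E D) :
    ∃ C, IsMaximalClique E C ∧ D ⊆ C := by
  classical
  obtain ⟨C, hCmem, hCmax⟩ := Finset.exists_max_image
    (Finset.univ.powerset.filter fun C => IsClique E C ∧ D ⊆ C) Finset.card
    ⟨D, by simp [hD]⟩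
  obtain ⟨-, hC, hDC⟩ := Finset.mem_filter.mp hCmem
  refine ⟨C, ⟨hC, fun C' hC' hCC' => ?_⟩, hDC⟩
  exact (Finset.eq_of_subset_of_card_le hCC' (hCmax C' (by simp [hC', hDC.trans hCC']))).symm

theorem principalPart_congr {S : Finset (Fin n)} {X Y : Matrix (Fin n) (Fin n) ℝ}
    (h : ∀ a ∈ S, ∀ b ∈ S, X a b = Y a b) : principalPart S X = principalPart S Y := by
  ext a b
  simp only [principalPart_apply]
  split_ifs with hab
  · exact h a hab.1 b hab.2
  · rfl

theorem psdCompletable_iff_s5 {p : ℕ} (hE : SymmEdges E) (hch : IsChordal E)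
    {C : Fin p → Finset (Fin n)} (hmax : ∀ k, IsMaximalClique E (C k))
    (hall : ∀ D, IsMaximalClique E D → ∃ k, C k = D) (X : Matrix (Fin n) (Fin n) ℝ) :
    PSDCompletable E X ↔
      SparseSym E X ∧ ∀ k, (selector (C k) * X * (selector (C k))ᵀ).PosSemidef := by
  refine ⟨fun ⟨hX, M, hM, hMX⟩ => ⟨hX, fun k => ?_⟩, fun ⟨hX, hXk⟩ => ⟨hX, ?_⟩⟩
  · have hC := (hmax k).1
    rw [← selector_mul_principalPart_mul, ← principalPart_congr fun a ha b hb =>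
      hMX a b (hC.mem_eStar ha hb), selector_mul_principalPart_mul]
    simpa [conjTranspose_eq_transpose_of_trivial] using
      hM.mul_mul_conjTranspose_same (selector (C k))
  · refine hch.exists_posSemidef_completion hE X fun D hD => ?_
    obtain ⟨C', hC', hDC'⟩ := hD.exists_isMaximalClique_superset
    obtain ⟨k, rfl⟩ := hall C' hC'
    rw [← principalPart_principalPart hDC', principalPart_eq_selector (C k)]
    refine posSemidef_principalPart ?_ D
    simpa [conjTranspose_eq_transpose_of_trivial] using
      (hXk k).conjTranspose_mul_mul_same (selector (C k))

end Decomposition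

theorem domain_space_decomposition_general {n m p : ℕ} (E : Set (Fin n × Fin n)) (hE : SymmEdges E)
    (hchordal : IsChordal E) (C : Fin p → Finset (Fin n))
    (hmax : ∀ k : Fin p, IsMaximalClique E (C k))
    (hall : ∀ D : Finset (Fin n), IsMaximalClique E D → ∃ k : Fin p, C k = D)
    (b : Fin m → ℝ) (Cmat : Matrix (Fin n) (Fin n) ℝ) (A : Fin m → Matrix (Fin n) (Fin n) ℝ) :
    sInf {v : EReal | ∃ X : Matrix (Fin n) (Fin n) ℝ, PSDCompletable E X ∧
        (∀ i : Fin m, (A i * X).trace = b i) ∧ v = ((Cmat * X).trace : EReal)} =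
    sInf {v : EReal | ∃ (X : Matrix (Fin n) (Fin n) ℝ)
        (Xk : (k : Fin p) → Matrix (Fin (C k).card) (Fin (C k).card) ℝ),
        SparseSym E X ∧
        (∀ i : Fin m, (A i * X).trace = b i) ∧
        (∀ k : Fin p, Xk k = selector (C k) * X * (selector (C k))ᵀ) ∧
        (∀ k : Fin p, (Xk k).PosSemidef) ∧
        v = ((Cmat * X).trace : EReal)} := by
  have hX := psdCompletable_iff_s5 hE hchordal hmax hall
  congr 1
  ext v
  constructor
  · rintro ⟨X, hXc, htr, rfl⟩
    exact ⟨X, _, ((hX X).1 hXc).1, htr, fun _ => rfl, ((hX X).1 hXc).2, rfl⟩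
  · rintro ⟨X, Xk, hXs, htr, hXk, hpsd, rfl⟩
    exact ⟨X, (hX X).2 ⟨hXs, fun k => hXk k ▸ hpsd k⟩, htr, rfl⟩

/-- **Domain-space decomposition.** Let `G(V,E)` be a chordal graph with maximal cliques
`C_1, …, C_p`, and suppose `C ∈ S^n(E,0)` and `A_i ∈ S^n(E,0)`.  Then the optimal value of
`inf {⟨C,X⟩ : ⟨A_i,X⟩ = b_i, X ∈ S^n_+(E,?)}` equals the optimal value of the decomposed SDP
`inf {⟨C,X⟩ : ⟨A_i,X⟩ = b_i, X_k = E_{C_k} X E_{C_k}ᵀ, X_k ⪰ 0}`, the latter infimum being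
over `X ∈ S^n(E,0)` and `X_k ∈ S^{|C_k|}`. -/
theorem domain_space_decomposition {n m p : ℕ} (E : Set (Fin n × Fin n)) (hE : SymmEdges E)
    (hchordal : IsChordal E) (C : Fin p → Finset (Fin n))
    (hmax : ∀ k : Fin p, IsMaximalClique E (C k))
    (hall : ∀ D : Finset (Fin n), IsMaximalClique E D → ∃ k : Fin p, C k = D)
    (b : Fin m → ℝ) (Cmat : Matrix (Fin n) (Fin n) ℝ) (A : Fin m → Matrix (Fin n) (Fin n) ℝ)
    (hCmat : SparseSym E Cmat) (hA : ∀ i : Fin m, SparseSym E (A i)) :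
    sInf {v : EReal | ∃ X : Matrix (Fin n) (Fin n) ℝ, PSDCompletable E X ∧
        (∀ i : Fin m, (A i * X).trace = b i) ∧ v = ((Cmat * X).trace : EReal)} =
    sInf {v : EReal | ∃ (X : Matrix (Fin n) (Fin n) ℝ)
        (Xk : (k : Fin p) → Matrix (Fin (C k).card) (Fin (C k).card) ℝ),
        SparseSym E X ∧
        (∀ i : Fin m, (A i * X).trace = b i) ∧
        (∀ k : Fin p, Xk k = selector (C k) * X * (selector (C k))ᵀ) ∧
        (∀ k : Fin p, (Xk k).PosSemidef) ∧
        v = ((Cmat * X).trace : EReal)} :=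
  domain_space_decomposition_general E hE hchordal C hmax hall b Cmat A
end

section
/- Recovery of optimal solutions from the HSDE: suppose u = (x,s,y,t,τ) ∈ K and v = (h,z,r,w,κ) ∈ K* satisfy v = Q u and τ > 0. Then x̂ = x/τ is feasible for the decomposed primal problem min{c^T x : A x = b, H x ∈ S} (indeed A x̂ = b and s/τ = H x̂ ∈ S), the pair (ŷ, t̂) = (y/τ, t/τ) is feasible for the decomposed dual problem max{b^T y : A^T y + H^T t = c, t ∈ S} (indeed A^T ŷ + H^T t̂ = c and t̂ = z/τ ∈ S), and the duality gap vanishes: c^T x̂ = b^T ŷ. Consequently x̂ is optimal for the primal problem and ŷ is optimal for the dual problem. -/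
/-
Reading `v = Q u` row by row, with `h = r = w = 0`, gives `A x = τ b`, `H x = s`,
`Aᵀ y + Hᵀ t = τ c`, `z = t` and `κ = bᵀy − cᵀx`. Dividing by `τ > 0` gives primal and dual
feasibility, and `κ ≥ 0` says that the duality gap `cᵀx̂ − bᵀŷ` is nonpositive. Weak duality
makes it nonnegative: the gap of any feasible pair is `⟨t, H x⟩`, a sum of Frobenius products
`tr (M P)` of PSD blocks, and writing `M = Xᴴ X` turns each into the trace of the PSD matrix
`X P Xᴴ`.
-/

open Matrix BigOperators

/-- Index type for the stacked (vectorized) semidefinite variables: one `|C_k| × |C_k|`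
block of coordinates for each clique `C_k`, so that its cardinality is `n_d = Σ_k |C_k|²`. -/
abbrev CliqueIdx {n p : ℕ} (C : Fin p → Finset (Fin n)) : Type :=
  Σ k : Fin p, Fin (C k).card × Fin (C k).card

/-- Membership in the product cone `S = S_1 × ⋯ × S_p` of vectorized PSD cones:
`s ∈ S` iff, for each clique `k`, the `|C_k| × |C_k|` matrix formed by the corresponding
block of coordinates of `s` is positive semidefinite. -/
def MemS {n p : ℕ} (C : Fin p → Finset (Fin n)) (s : CliqueIdx C → ℝ) : Prop :=
  ∀ k : Fin p,
    Matrix.PosSemidef (Matrix.of fun i j : Fin (C k).card => s ⟨k, (i, j)⟩)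

/-- Index type for the HSDE variables `u = (x, s, y, t, τ)` and `v = (h, z, r, w, κ)`. -/
abbrev HsdeIdx {n p : ℕ} (C : Fin p → Finset (Fin n)) (N m : ℕ) : Type :=
  Fin N ⊕ (CliqueIdx C ⊕ (Fin m ⊕ (CliqueIdx C ⊕ Unit)))

/-- Stacking of the five components into a single vector. -/
def stackVec {n p N m : ℕ} (C : Fin p → Finset (Fin n))
    (x : Fin N → ℝ) (s : CliqueIdx C → ℝ) (y : Fin m → ℝ) (t : CliqueIdx C → ℝ) (τ : ℝ) :
    HsdeIdx C N m → ℝ :=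
  Sum.elim x (Sum.elim s (Sum.elim y (Sum.elim t fun _ => τ)))

/-- The HSDE matrix
`Q = [[0, 0, −Aᵀ, −Hᵀ, c],[0, 0, 0, I, 0],[A, 0, 0, 0, −b],[H, −I, 0, 0, 0],[−cᵀ, 0, bᵀ, 0, 0]]`. -/
def hsdeQ {n p N m : ℕ} (C : Fin p → Finset (Fin n))
    (A : Matrix (Fin m) (Fin N) ℝ) (H : Matrix (CliqueIdx C) (Fin N) ℝ)
    (b : Fin m → ℝ) (c : Fin N → ℝ) :
    Matrix (HsdeIdx C N m) (HsdeIdx C N m) ℝ :=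
  fun i j =>
    match i, j with
    | Sum.inl i, Sum.inr (Sum.inr (Sum.inl j)) => -A j i
    | Sum.inl i, Sum.inr (Sum.inr (Sum.inr (Sum.inl j))) => -H j i
    | Sum.inl i, Sum.inr (Sum.inr (Sum.inr (Sum.inr _))) => c i
    | Sum.inr (Sum.inl i), Sum.inr (Sum.inr (Sum.inr (Sum.inl j))) =>
        if i = j then 1 else 0
    | Sum.inr (Sum.inr (Sum.inl i)), Sum.inl j => A i j
    | Sum.inr (Sum.inr (Sum.inl i)), Sum.inr (Sum.inr (Sum.inr (Sum.inr _))) => -b i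
    | Sum.inr (Sum.inr (Sum.inr (Sum.inl i))), Sum.inl j => H i j
    | Sum.inr (Sum.inr (Sum.inr (Sum.inl i))), Sum.inr (Sum.inl j) =>
        if i = j then -1 else 0
    | Sum.inr (Sum.inr (Sum.inr (Sum.inr _))), Sum.inl j => -c j
    | Sum.inr (Sum.inr (Sum.inr (Sum.inr _))), Sum.inr (Sum.inr (Sum.inl j)) => b j
    | _, _ => 0

open scoped ComplexOrder MatrixOrder in
theorem Matrix.PosSemidef.trace_mul_nonneg_s16 {ι 𝕜 : Type*} [Fintype ι] [RCLike 𝕜]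
    {M P : Matrix ι ι 𝕜} (hM : M.PosSemidef) (hP : P.PosSemidef) : 0 ≤ (M * P).trace := by
  classical
  obtain ⟨X, rfl⟩ := CStarAlgebra.nonneg_iff_eq_star_mul_self.mp hM.nonneg
  rw [star_eq_conjTranspose, mul_assoc, trace_mul_comm]
  exact (hP.mul_mul_conjTranspose_same X).trace_nonneg

def cliqueBlock {n p : ℕ} (C : Fin p → Finset (Fin n)) (s : CliqueIdx C → ℝ) (k : Fin p) :
    Matrix (Fin (C k).card) (Fin (C k).card) ℝ :=
  Matrix.of fun i j => s ⟨k, (i, j)⟩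

section Cone

variable {n p : ℕ} {C : Fin p → Finset (Fin n)}

theorem memS_iff_forall_posSemidef_cliqueBlock {s : CliqueIdx C → ℝ} :
    MemS C s ↔ ∀ k, (cliqueBlock C s k).PosSemidef := Iff.rfl

theorem cliqueBlock_smul (r : ℝ) (s : CliqueIdx C → ℝ) (k : Fin p) :
    cliqueBlock C (r • s) k = r • cliqueBlock C s k := rfl

theorem dotProduct_eq_sum_trace_cliqueBlock (a b : CliqueIdx C → ℝ) :
    a ⬝ᵥ b = ∑ k, (cliqueBlock C a k * (cliqueBlock C b k)ᵀ).trace := by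
  simp [dotProduct, Fintype.sum_sigma, Fintype.sum_prod_type, trace, mul_apply, cliqueBlock]

theorem MemS.smul {s : CliqueIdx C → ℝ} (hs : MemS C s) {r : ℝ} (hr : 0 ≤ r) :
    MemS C (r • s) := by
  rw [memS_iff_forall_posSemidef_cliqueBlock] at hs ⊢
  exact fun k => cliqueBlock_smul r s k ▸ (hs k).smul hr

theorem MemS.dotProduct_nonneg {a b : CliqueIdx C → ℝ} (ha : MemS C a) (hb : MemS C b) :
    0 ≤ a ⬝ᵥ b := by
  rw [memS_iff_forall_posSemidef_cliqueBlock] at ha hb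
  rw [dotProduct_eq_sum_trace_cliqueBlock]
  refine Finset.sum_nonneg fun k _ => ?_
  rw [← conjTranspose_eq_transpose_of_trivial, (hb k).isHermitian.eq]
  exact (ha k).trace_mul_nonneg_s16 (hb k)

end Cone

theorem hsdeQ_mulVec_stackVec {n p N m : ℕ} (C : Fin p → Finset (Fin n))
    (A : Matrix (Fin m) (Fin N) ℝ) (H : Matrix (CliqueIdx C) (Fin N) ℝ)
    (b : Fin m → ℝ) (c : Fin N → ℝ)
    (x : Fin N → ℝ) (s : CliqueIdx C → ℝ) (y : Fin m → ℝ) (t : CliqueIdx C → ℝ) (τ : ℝ) :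
    hsdeQ C A H b c *ᵥ stackVec C x s y t τ =
      stackVec C (τ • c - Aᵀ *ᵥ y - Hᵀ *ᵥ t) t (A *ᵥ x - τ • b) (H *ᵥ x - s)
        (b ⬝ᵥ y - c ⬝ᵥ x) := by
  funext i
  rcases i with i | i | i | i | i <;>
  simp only [mulVec, dotProduct, Fintype.sum_sum_type, hsdeQ, stackVec, Sum.elim_inl,
    Sum.elim_inr, zero_mul, Finset.sum_const_zero, neg_mul, Finset.sum_neg_distrib, ite_mul,
    one_mul, Finset.sum_ite_eq, Finset.mem_univ, if_true, transpose_apply, Pi.sub_apply,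
    Pi.smul_apply, smul_eq_mul, Fintype.sum_unique] <;>
  ring

theorem stackVec_inj {n p N m : ℕ} {C : Fin p → Finset (Fin n)}
    {x x' : Fin N → ℝ} {s s' : CliqueIdx C → ℝ} {y y' : Fin m → ℝ} {t t' : CliqueIdx C → ℝ}
    {τ τ' : ℝ} :
    stackVec C x s y t τ = stackVec C x' s' y' t' τ' ↔
      x = x' ∧ s = s' ∧ y = y' ∧ t = t' ∧ τ = τ' := by
  simp [stackVec, funext_iff, Sum.forall]

theorem duality_gap_eq {ι κ μ : Type*} [Fintype ι] [Fintype κ] [Fintype μ]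
    {A : Matrix ι κ ℝ} {H : Matrix μ κ ℝ} {b : ι → ℝ} {c x : κ → ℝ} {y : ι → ℝ} {t : μ → ℝ}
    (hx : A *ᵥ x = b) (hy : Aᵀ *ᵥ y + Hᵀ *ᵥ t = c) :
    c ⬝ᵥ x - b ⬝ᵥ y = t ⬝ᵥ (H *ᵥ x) := by
  rw [← hy, ← hx, add_dotProduct, mulVec_transpose, mulVec_transpose, ← dotProduct_mulVec,
    ← dotProduct_mulVec, dotProduct_comm (A *ᵥ x), add_sub_cancel_left]

theorem weak_duality {n p : ℕ} {C : Fin p → Finset (Fin n)} {ι κ : Type*} [Fintype ι]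
    [Fintype κ] {A : Matrix ι κ ℝ} {H : Matrix (CliqueIdx C) κ ℝ} {b : ι → ℝ} {c x : κ → ℝ}
    {y : ι → ℝ} {t : CliqueIdx C → ℝ}
    (hx : A *ᵥ x = b) (hHx : MemS C (H *ᵥ x)) (hy : Aᵀ *ᵥ y + Hᵀ *ᵥ t = c) (ht : MemS C t) :
    b ⬝ᵥ y ≤ c ⬝ᵥ x :=
  sub_nonneg.mp (duality_gap_eq hx hy ▸ ht.dotProduct_nonneg hHx)

theorem hsde_solution_recovery_general {n p N m : ℕ} (C : Fin p → Finset (Fin n))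
    (A : Matrix (Fin m) (Fin N) ℝ) (H : Matrix (CliqueIdx C) (Fin N) ℝ)
    (b : Fin m → ℝ) (c : Fin N → ℝ)
    (x : Fin N → ℝ) (s : CliqueIdx C → ℝ) (y : Fin m → ℝ) (t : CliqueIdx C → ℝ) (τ : ℝ)
    (h : Fin N → ℝ) (z : CliqueIdx C → ℝ) (r : Fin m → ℝ) (w : CliqueIdx C → ℝ) (κ : ℝ)
    (hs : MemS C s)
    (hh : h = 0) (hz : MemS C z) (hr : r = 0) (hw : w = 0) (hκ : 0 ≤ κ)
    (heq : stackVec C h z r w κ = (hsdeQ C A H b c) *ᵥ stackVec C x s y t τ)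
    (hτ : 0 < τ) :
    A *ᵥ (τ⁻¹ • x) = b ∧
    H *ᵥ (τ⁻¹ • x) = τ⁻¹ • s ∧ MemS C (H *ᵥ (τ⁻¹ • x)) ∧
    Aᵀ *ᵥ (τ⁻¹ • y) + Hᵀ *ᵥ (τ⁻¹ • t) = c ∧
    τ⁻¹ • t = τ⁻¹ • z ∧ MemS C (τ⁻¹ • t) ∧
    c ⬝ᵥ (τ⁻¹ • x) = b ⬝ᵥ (τ⁻¹ • y) ∧
    (∀ x' : Fin N → ℝ, A *ᵥ x' = b → MemS C (H *ᵥ x') →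
      c ⬝ᵥ (τ⁻¹ • x) ≤ c ⬝ᵥ x') ∧
    (∀ (y' : Fin m → ℝ) (t' : CliqueIdx C → ℝ),
      Aᵀ *ᵥ y' + Hᵀ *ᵥ t' = c → MemS C t' → b ⬝ᵥ y' ≤ b ⬝ᵥ (τ⁻¹ • y)) := by
  subst hh hr hw
  rw [hsdeQ_mulVec_stackVec, stackVec_inj] at heq
  obtain ⟨hdual, rfl, hprimal, hslack, rfl⟩ := heq
  have hτ_inv : 0 ≤ τ⁻¹ := inv_nonneg.mpr hτ.le
  have hAx : A *ᵥ (τ⁻¹ • x) = b := by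
    rw [mulVec_smul, eq_of_sub_eq_zero hprimal.symm, inv_smul_smul₀ hτ.ne']
  have hHx : H *ᵥ (τ⁻¹ • x) = τ⁻¹ • s := by
    rw [mulVec_smul, eq_of_sub_eq_zero hslack.symm]
  have hHx_mem : MemS C (H *ᵥ (τ⁻¹ • x)) := hHx ▸ hs.smul hτ_inv
  have hAy : Aᵀ *ᵥ (τ⁻¹ • y) + Hᵀ *ᵥ (τ⁻¹ • z) = c := by
    rw [sub_sub, eq_comm, sub_eq_zero] at hdual
    rw [mulVec_smul, mulVec_smul, ← smul_add, ← hdual, inv_smul_smul₀ hτ.ne']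
  have hz_mem : MemS C (τ⁻¹ • z) := hz.smul hτ_inv
  have hgap : c ⬝ᵥ (τ⁻¹ • x) = b ⬝ᵥ (τ⁻¹ • y) := by
    refine le_antisymm ?_ (weak_duality hAx hHx_mem hAy hz_mem)
    rw [dotProduct_smul, dotProduct_smul]
    exact smul_le_smul_of_nonneg_left (sub_nonneg.mp hκ) hτ_inv
  refine ⟨hAx, hHx, hHx_mem, hAy, rfl, hz_mem, hgap, fun x' hx' hHx' => ?_, fun y' t' hy' ht' => ?_⟩
  · exact hgap ▸ weak_duality hx' hHx' hAy hz_mem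
  · exact hgap ▸ weak_duality hAx hHx_mem hy' ht'

/-- **Recovery of optimal solutions from the HSDE.** If `u = (x,s,y,t,τ) ∈ K` and
`v = (h,z,r,w,κ) ∈ K*` satisfy `v = Q u` and `τ > 0`, then `x̂ = x/τ` is feasible for the
decomposed primal `min {cᵀx : Ax = b, Hx ∈ S}`, `(ŷ, t̂) = (y/τ, t/τ)` is feasible for the
decomposed dual `max {bᵀy : Aᵀy + Hᵀt = c, t ∈ S}` (with `t̂ = z/τ ∈ S`), the duality gap
vanishes (`cᵀx̂ = bᵀŷ`), and consequently `x̂` is primal optimal and `ŷ` is dual optimal. -/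
theorem hsde_solution_recovery {n p N m : ℕ} (C : Fin p → Finset (Fin n))
    (A : Matrix (Fin m) (Fin N) ℝ) (H : Matrix (CliqueIdx C) (Fin N) ℝ)
    (b : Fin m → ℝ) (c : Fin N → ℝ)
    (x : Fin N → ℝ) (s : CliqueIdx C → ℝ) (y : Fin m → ℝ) (t : CliqueIdx C → ℝ) (τ : ℝ)
    (h : Fin N → ℝ) (z : CliqueIdx C → ℝ) (r : Fin m → ℝ) (w : CliqueIdx C → ℝ) (κ : ℝ)
    (hs : MemS C s) (hτK : 0 ≤ τ)
    (hh : h = 0) (hz : MemS C z) (hr : r = 0) (hw : w = 0) (hκ : 0 ≤ κ)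
    (heq : stackVec C h z r w κ = (hsdeQ C A H b c) *ᵥ stackVec C x s y t τ)
    (hτ : 0 < τ) :
    A *ᵥ (τ⁻¹ • x) = b ∧
    H *ᵥ (τ⁻¹ • x) = τ⁻¹ • s ∧ MemS C (H *ᵥ (τ⁻¹ • x)) ∧
    Aᵀ *ᵥ (τ⁻¹ • y) + Hᵀ *ᵥ (τ⁻¹ • t) = c ∧
    τ⁻¹ • t = τ⁻¹ • z ∧ MemS C (τ⁻¹ • t) ∧
    c ⬝ᵥ (τ⁻¹ • x) = b ⬝ᵥ (τ⁻¹ • y) ∧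
    (∀ x' : Fin N → ℝ, A *ᵥ x' = b → MemS C (H *ᵥ x') →
      c ⬝ᵥ (τ⁻¹ • x) ≤ c ⬝ᵥ x') ∧
    (∀ (y' : Fin m → ℝ) (t' : CliqueIdx C → ℝ),
      Aᵀ *ᵥ y' + Hᵀ *ᵥ t' = c → MemS C t' → b ⬝ᵥ y' ≤ b ⬝ᵥ (τ⁻¹ • y)) :=
  hsde_solution_recovery_general C A H b c x s y t τ h z r w κ hs hh hz hr hw hκ heq hτ
end
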